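/- arXiv:1611.04894 — 5 statements merged into one kernel-verified Lean document; each statement's English description precedes it below -/
import Mathlib

section
/- Let (D^q)_{q∈ℕ} be an increasing multiplicative filtration of an algebra D, let Δ ∈ End with [Δ, D^q] ⊆ D^{q+r-1}, and define D[Δ]^q = Σ_{q' + r·q'' = q} D^{q'}_{q''}[Δ], the span of elements X Δ^i with X ∈ D^{q'} and r·i + q' ≤ q. Then (D[Δ]^q)_{q∈ℕ} is an increasing multiplicative filtration of the algebra D[Δ]: D[Δ]^{q₁} ⊆ D[Δ]^{q₂} for q₁ ≤ q₂, and D[Δ]^q · D[Δ]^{q'} ⊆ D[Δ]^{q+q'}. -/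
/-- The filtration `D[Δ]^q = span{X Δ^i | X ∈ D^{q'}, r·i + q' ≤ q}` on the algebra of
polynomials in `Δ` with coefficients in `D` is increasing and multiplicative. -/
theorem adjoined_laplacian_filtration {A : Type*} [Ring A] [Algebra ℂ A]
    (F : ℕ → Submodule ℂ A) (hmono : Monotone F)
    (hmul : ∀ i j : ℕ, ∀ x ∈ F i, ∀ y ∈ F j, x * y ∈ F (i + j))
    (Δ : A) (r : ℕ) (hr : 1 ≤ r)
    (hΔ : ∀ q : ℕ, ∀ X ∈ F q, Δ * X - X * Δ ∈ F (q + r - 1))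
    (G : ℕ → Submodule ℂ A)
    (hG : ∀ q, G q = Submodule.span ℂ
      {a : A | ∃ (X : A) (i q' : ℕ), X ∈ F q' ∧ r * i + q' ≤ q ∧ a = X * Δ ^ i}) :
    Monotone G ∧ ∀ q q' : ℕ, ∀ x ∈ G q, ∀ y ∈ G q', x * y ∈ G (q + q') := by
  -- generator membership
  have hgen : ∀ (q : ℕ) (X : A) (i q' : ℕ), X ∈ F q' → r * i + q' ≤ q →
      X * Δ ^ i ∈ G q := by
    intro q X i q' hX hle
    rw [hG]
    exact Submodule.subset_span ⟨X, i, q', hX, hle, rfl⟩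
  -- monotonicity
  have hGmono : Monotone G := by
    intro a b hab
    rw [hG, hG]
    apply Submodule.span_mono
    rintro x ⟨X, i, q', hX, hle, rfl⟩
    exact ⟨X, i, q', hX, hle.trans hab, rfl⟩
  -- left multiplication by Δ raises degree by r
  have hDelta : ∀ (n : ℕ), ∀ z ∈ G n, Δ * z ∈ G (n + r) := by
    intro n z hz
    rw [hG] at hz
    induction hz using Submodule.span_induction with
    | mem a ha =>
      obtain ⟨X, i, q', hX, hle, rfl⟩ := ha
      have key : Δ * (X * Δ ^ i) = X * Δ ^ (i + 1) + (Δ * X - X * Δ) * Δ ^ i := by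
        simp only [pow_succ', sub_mul, ← mul_assoc]
        abel
      rw [key]
      refine Submodule.add_mem _ ?_ ?_
      · exact hgen _ X (i + 1) q' hX (by rw [Nat.mul_succ]; omega)
      · exact hgen _ _ i (q' + r - 1) (hΔ q' X hX) (by omega)
    | zero => simpa using Submodule.zero_mem _
    | add x y _ _ hx hy => rw [mul_add]; exact Submodule.add_mem _ hx hy
    | smul c x _ hx => rw [mul_smul_comm]; exact Submodule.smul_mem _ c hx
  -- commuting a power of Δ past an element of F q'
  have hcomm : ∀ (i q' : ℕ) (Y : A), Y ∈ F q' → Δ ^ i * Y ∈ G (r * i + q') := by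
    intro i
    induction i with
    | zero =>
      intro q' Y hY
      simpa using hgen _ Y 0 q' hY (by simp)
    | succ i ih =>
      intro q' Y hY
      have : Δ ^ (i + 1) * Y = Δ * (Δ ^ i * Y) := by rw [pow_succ']; rw [mul_assoc]
      rw [this]
      have := hDelta _ _ (ih q' Y hY)
      have heq : r * i + q' + r = r * (i + 1) + q' := by ring
      rwa [heq] at this
  -- left multiplication by an element of F p
  have hleft : ∀ (p n : ℕ) (X : A), X ∈ F p → ∀ z ∈ G n, X * z ∈ G (p + n) := by
    intro p n X hX z hz
    rw [hG] at hz
    induction hz using Submodule.span_induction with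
    | mem a ha =>
      obtain ⟨Y, i, q', hY, hle, rfl⟩ := ha
      rw [← mul_assoc]
      exact hgen _ (X * Y) i (p + q') (hmul p q' X hX Y hY) (by omega)
    | zero => simpa using Submodule.zero_mem _
    | add x y _ _ hx hy => rw [mul_add]; exact Submodule.add_mem _ hx hy
    | smul c x _ hx => rw [mul_smul_comm]; exact Submodule.smul_mem _ c hx
  -- right multiplication by a power of Δ
  have hright : ∀ (n j : ℕ), ∀ z ∈ G n, z * Δ ^ j ∈ G (n + r * j) := by
    intro n j z hz
    rw [hG] at hz
    induction hz using Submodule.span_induction with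
    | mem a ha =>
      obtain ⟨Y, i, q', hY, hle, rfl⟩ := ha
      rw [mul_assoc, ← pow_add]
      exact hgen _ Y (i + j) q' hY (by have := Nat.mul_add r i j; omega)
    | zero => simpa using Submodule.zero_mem _
    | add x y _ _ hx hy => rw [add_mul]; exact Submodule.add_mem _ hx hy
    | smul c x _ hx => rw [smul_mul_assoc]; exact Submodule.smul_mem _ c hx
  refine ⟨hGmono, ?_⟩
  intro q q' x hx y hy
  rw [hG] at hx
  induction hx using Submodule.span_induction with
  | mem a ha =>
    obtain ⟨X, i, p, hX, hle, rfl⟩ := ha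
    rw [hG q'] at hy
    induction hy using Submodule.span_induction with
    | mem b hb =>
      obtain ⟨Y, j, p', hY, hle', rfl⟩ := hb
      have key : X * Δ ^ i * (Y * Δ ^ j) = X * (Δ ^ i * Y) * Δ ^ j := by
        noncomm_ring
      rw [key]
      have h1 := hcomm i p' Y hY
      have h2 := hleft p _ X hX _ h1
      have h3 := hright _ j _ h2
      exact hGmono (by omega : p + (r * i + p') + r * j ≤ q + q') h3
    | zero => simpa using Submodule.zero_mem _
    | add u v _ _ hu hv => rw [mul_add]; exact Submodule.add_mem _ hu hv
    | smul c u _ hu => rw [mul_smul_comm]; exact Submodule.smul_mem _ c hu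
  | zero => simpa using Submodule.zero_mem _
  | add u v _ _ hu hv => rw [add_mul]; exact Submodule.add_mem _ hu hv
  | smul c u _ hu => rw [smul_mul_assoc]; exact Submodule.smul_mem _ c hu
end

section
/- Let Δ be a positive invertible self-adjoint operator with compact resolvent on a Hilbert space H, and let X be an operator such that X Δ^{-a} is trace class for some real a. Then the function ζ(z) = Trace(X Δ^{-z}) is holomorphic on the half-plane {Re(z) > a}, with derivative ζ'(z) = -Trace(X log(Δ) Δ^{-z}). -/
/-! Each term `λ ^ (-w) ⟪e, X e⟫` is entire with derivative `-log λ · λ ^ (-w) ⟪e, X e⟫`.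
On a strip `b < Re w < R` with `a < b`, a logarithm is absorbed by the spare power
`λ ^ (a - b)` uniformly for `λ ≥ c > 0`, so the differentiated series is dominated by a multiple
of the convergent series `∑ λₙ ^ (-a) ‖X eₙ‖`, and the series may be differentiated termwise. -/

namespace Real

variable {a c x : ℝ}

theorem abs_log_le_abs_log_add_rpow_div (hc : 0 < c) (hcx : c ≤ x) {δ : ℝ} (hδ : 0 < δ) :
    |log x| ≤ |log c| + x ^ δ / δ := by
  have hx : 0 < x := hc.trans_le hcx
  rcases le_total 0 (log x) with hlog | hlog
  · rw [abs_of_nonneg hlog]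
    linarith [abs_nonneg (log c), log_le_rpow_div hx.le hδ]
  · rw [abs_of_nonpos hlog]
    linarith [neg_abs_le (log c), log_le_log hc hcx, div_nonneg (rpow_nonneg hx.le δ) hδ.le]

theorem rpow_neg_le_mul_rpow_neg (hc : 0 < c) (hcx : c ≤ x) {t : ℝ} (hat : a ≤ t) :
    x ^ (-t) ≤ c ^ (a - t) * x ^ (-a) := by
  have hx : 0 < x := hc.trans_le hcx
  calc x ^ (-t) = x ^ (a - t) * x ^ (-a) := by rw [← rpow_add hx]; ring_nf
    _ ≤ c ^ (a - t) * x ^ (-a) := by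
      gcongr ?_ * x ^ (-a)
      exact rpow_le_rpow_of_nonpos hc hcx (by linarith)

theorem abs_log_mul_rpow_neg_le (hc : 0 < c) (hcx : c ≤ x) {t : ℝ} (hat : a < t) :
    |log x| * x ^ (-t) ≤ (|log c| * c ^ (a - t) + (t - a)⁻¹) * x ^ (-a) := by
  have hx : 0 < x := hc.trans_le hcx
  have hδ : 0 < t - a := sub_pos.2 hat
  have hsplit : x ^ (-t) = x ^ (-(t - a)) * x ^ (-a) := by rw [← rpow_add hx]; ring_nf
  have hbound : |log x| * x ^ (-(t - a)) ≤ |log c| * c ^ (a - t) + (t - a)⁻¹ :=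
    calc |log x| * x ^ (-(t - a)) ≤ (|log c| + x ^ (t - a) / (t - a)) * x ^ (-(t - a)) := by
          gcongr
          exact abs_log_le_abs_log_add_rpow_div hc hcx hδ
      _ = |log c| * x ^ (-(t - a)) + (t - a)⁻¹ := by
          rw [add_mul, div_mul_eq_mul_div, ← rpow_add hx, add_neg_cancel, rpow_zero, one_div]
      _ ≤ |log c| * c ^ (a - t) + (t - a)⁻¹ := by
          gcongr
          simpa using rpow_le_rpow_of_nonpos hc hcx (by linarith : -(t - a) ≤ 0)
  rw [hsplit, ← mul_assoc]
  gcongr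

theorem rpow_neg_le_rpow_neg_add_rpow_neg {b s R : ℝ} (hx : 0 < x) (hbs : b ≤ s) (hsR : s ≤ R) :
    x ^ (-s) ≤ x ^ (-b) + x ^ (-R) := by
  rcases le_total 1 x with h1 | h1
  · linarith [rpow_le_rpow_of_exponent_le h1 (neg_le_neg hbs), rpow_nonneg hx.le (-R)]
  · linarith [rpow_le_rpow_of_exponent_ge hx h1 (neg_le_neg hsR), rpow_nonneg hx.le (-b)]

end Real

theorem Complex.hasDerivAt_ofReal_cpow_neg {x : ℝ} (hx : 0 < x) (w : ℂ) :
    HasDerivAt (fun w : ℂ => (x : ℂ) ^ (-w)) (-(Real.log x : ℂ) * (x : ℂ) ^ (-w)) w := by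
  have hx' : (x : ℂ) ≠ 0 := Complex.ofReal_ne_zero.2 hx.ne'
  refine ((hasDerivAt_neg w).const_cpow (c := (x : ℂ)) (Or.inl hx')).congr_deriv ?_
  rw [Complex.ofReal_log hx.le]
  ring

theorem hasDerivAt_tsum_ofReal_cpow_neg_mul {ι : Type*} {lam : ι → ℝ} {f : ι → ℂ} {a c : ℝ}
    (hc : 0 < c) (hlam : ∀ i, c ≤ lam i) (hf : Summable fun i => lam i ^ (-a) * ‖f i‖)
    {z : ℂ} (hz : a < z.re) :
    HasDerivAt (fun w : ℂ => ∑' i, (lam i : ℂ) ^ (-w) * f i)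
      (-∑' i, (Real.log (lam i) : ℂ) * (lam i : ℂ) ^ (-z) * f i) z := by
  have hpos : ∀ i, 0 < lam i := fun i => hc.trans_le (hlam i)
  have hnorm : ∀ i (w : ℂ), ‖(lam i : ℂ) ^ (-w)‖ = lam i ^ (-w.re) := fun i w => by
    rw [Complex.norm_cpow_eq_rpow_re_of_pos (hpos i), Complex.neg_re]
  obtain ⟨b, hab, hbz⟩ := exists_between hz
  obtain ⟨R, hzR⟩ := exists_gt z.re
  set s : Set ℂ := Complex.re ⁻¹' Set.Ioo b R
  have hzs : z ∈ s := ⟨hbz, hzR⟩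
  set K := (|Real.log c| * c ^ (a - b) + (b - a)⁻¹) + (|Real.log c| * c ^ (a - R) + (R - a)⁻¹)
  have hlog_le : ∀ i, ∀ w ∈ s, |Real.log (lam i)| * lam i ^ (-w.re) ≤ K * lam i ^ (-a) := by
    intro i w ⟨hbw, hwR⟩
    calc |Real.log (lam i)| * lam i ^ (-w.re)
        ≤ |Real.log (lam i)| * lam i ^ (-b) + |Real.log (lam i)| * lam i ^ (-R) := by
          rw [← mul_add]
          exact mul_le_mul_of_nonneg_left
            (Real.rpow_neg_le_rpow_neg_add_rpow_neg (hpos i) hbw.le hwR.le) (abs_nonneg _)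
      _ ≤ K * lam i ^ (-a) := by
          rw [add_mul]
          exact add_le_add (Real.abs_log_mul_rpow_neg_le hc (hlam i) hab)
            (Real.abs_log_mul_rpow_neg_le hc (hlam i) (by linarith))
  have hderiv_le : ∀ i, ∀ w ∈ s,
      ‖-(Real.log (lam i) : ℂ) * (lam i : ℂ) ^ (-w) * f i‖ ≤ K * (lam i ^ (-a) * ‖f i‖) := by
    intro i w hw
    rw [norm_mul, norm_mul, norm_neg, Complex.norm_real, Real.norm_eq_abs, hnorm, ← mul_assoc]
    exact mul_le_mul_of_nonneg_right (hlog_le i w hw) (norm_nonneg _)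
  have hsummable : Summable fun i => (lam i : ℂ) ^ (-z) * f i := by
    refine Summable.of_norm_bounded (hf.mul_left (c ^ (a - z.re))) fun i => ?_
    rw [norm_mul, hnorm, ← mul_assoc]
    exact mul_le_mul_of_nonneg_right
      (Real.rpow_neg_le_mul_rpow_neg hc (hlam i) hz.le) (norm_nonneg _)
  have hs_open : IsOpen s := isOpen_Ioo.preimage Complex.continuous_re
  have hs_conn : IsPreconnected s := ((convex_Ioo b R).linear_preimage Complex.reLm).isPreconnected
  refine (hasDerivAt_tsum_of_isPreconnected (hf.mul_left K) hs_open hs_conn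
    (fun i w _ => (Complex.hasDerivAt_ofReal_cpow_neg (hpos i) w).mul_const (f i))
    hderiv_le hzs hsummable hzs).congr_deriv ?_
  rw [← tsum_neg]
  congr 1 with i
  ring

-- `Δ` is given by its spectral data: eigenbasis `e` with eigenvalues `lam`; the trace of
-- `X Δ^{-z}` is the sum of its diagonal matrix coefficients.
theorem zeta_holomorphic_general {H : Type*} [NormedAddCommGroup H]
    [InnerProductSpace ℂ H] [CompleteSpace H]
    (e : HilbertBasis ℕ ℂ H) (lam : ℕ → ℝ)
    (hinv : ∃ c > 0, ∀ n, c ≤ lam n)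
    (X : H →L[ℂ] H) (a : ℝ)
    (htrace : Summable fun n => (lam n) ^ (-a) * ‖X (e n)‖) :
    ∀ z : ℂ, a < z.re →
      HasDerivAt
        (fun w : ℂ => ∑' n, (lam n : ℂ) ^ (-w) * (inner ℂ (e n) (X (e n)) : ℂ))
        (-∑' n, (Real.log (lam n) : ℂ) * (lam n : ℂ) ^ (-z) *
          (inner ℂ (e n) (X (e n)) : ℂ)) z := by
  intro z hz
  obtain ⟨c, hc, hlam⟩ := hinv
  have hdiag : ∀ n, ‖(inner ℂ (e n) (X (e n)) : ℂ)‖ ≤ ‖X (e n)‖ := fun n =>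
    (norm_inner_le_norm _ _).trans_eq (by rw [e.orthonormal.1 n, one_mul])
  have hweight : ∀ n, 0 ≤ lam n ^ (-a) := fun n => Real.rpow_nonneg (hc.trans_le (hlam n)).le _
  exact hasDerivAt_tsum_ofReal_cpow_neg_mul hc hlam
    (htrace.of_nonneg_of_le (fun n => mul_nonneg (hweight n) (norm_nonneg _))
      fun n => mul_le_mul_of_nonneg_left (hdiag n) (hweight n)) hz

/-- If `X Δ^{-a}` is trace class, then `ζ(z) = Trace(X Δ^{-z})` is holomorphic on
`{Re z > a}` with derivative `-Trace(X log(Δ) Δ^{-z})`.  Here `Δ` is presented by its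
spectral data (Hilbert basis of eigenvectors `e`, eigenvalues `lam`), and the trace
is the sum of diagonal matrix coefficients. -/
theorem zeta_holomorphic {H : Type*} [NormedAddCommGroup H]
    [InnerProductSpace ℂ H] [CompleteSpace H]
    (e : HilbertBasis ℕ ℂ H) (lam : ℕ → ℝ)
    (hpos : ∀ n, 0 < lam n) (hinv : ∃ c > 0, ∀ n, c ≤ lam n)
    (hcpt : Filter.Tendsto lam Filter.atTop Filter.atTop)
    (X : H →L[ℂ] H) (a : ℝ)
    (htrace : Summable fun n => (lam n) ^ (-a) * ‖X (e n)‖) :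
    ∀ z : ℂ, a < z.re →
      HasDerivAt
        (fun w : ℂ => ∑' n, (lam n : ℂ) ^ (-w) * (inner ℂ (e n) (X (e n)) : ℂ))
        (-∑' n, (Real.log (lam n) : ℂ) * (lam n : ℂ) ^ (-z) *
          (inner ℂ (e n) (X (e n)) : ℂ)) z :=
  zeta_holomorphic_general e lam hinv X a htrace
end

section
/- Let Δ be a positive invertible self-adjoint operator with compact resolvent such that Δ^{-1/r} ∈ L^p(H) for some p ≥ 1, and let X ∈ Op^{-t} for some real t. Then the spectral zeta function z ↦ Trace(X Δ^{-z}) is holomorphic on the half-plane {Re(z) > (p - t)/r}. -/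
/-!
Since `X = Δ^{-t/r} B`, the diagonal coefficients satisfy `|⟪e n, X e n⟫| ≤ λₙ^{-t/r} ‖B‖`, so on
`Re z ≥ σ` the zeta series is dominated by `‖B‖ ∑ λₙ^{-(σ + t/r)}`. As `λₙ → ∞`, this converges
by comparison with the Schatten sum `∑ λₙ^{-p/r}` as soon as `σ > (p - t)/r`. On a vertical strip
`σ < Re z < M` the terms are dominated uniformly by `λₙ^{-σ} + λₙ^{-M}` (times the coefficient),
so the sum is holomorphic there by Weierstrass's theorem.
-/

open Filter Set

lemma Real.rpow_le_rpow_add_rpow_of_mem_Icc {x a b s : ℝ} (hx : 0 < x) (hs : s ∈ Icc a b) :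
    x ^ s ≤ x ^ a + x ^ b := by
  rcases le_or_gt 1 x with h1 | h1
  · have := Real.rpow_le_rpow_of_exponent_le h1 hs.2
    linarith [Real.rpow_nonneg hx.le a]
  · have := Real.rpow_le_rpow_of_exponent_ge hx h1.le hs.1
    linarith [Real.rpow_nonneg hx.le b]

lemma summable_rpow_neg_of_le {ι : Type*} {f : ι → ℝ} (hf : ∀ᶠ i in cofinite, 1 ≤ f i)
    {a b : ℝ} (hb : Summable fun i => f i ^ (-b)) (hab : b ≤ a) :
    Summable fun i => f i ^ (-a) := by
  refine hb.of_norm_bounded_eventually ?_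
  filter_upwards [hf] with i hi
  rw [Real.norm_of_nonneg (Real.rpow_nonneg (zero_le_one.trans hi) _)]
  exact Real.rpow_le_rpow_of_exponent_le hi (neg_le_neg hab)

lemma ContinuousLinearMap.norm_inner_map_le_opNorm {𝕜 E : Type*} [RCLike 𝕜]
    [NormedAddCommGroup E] [InnerProductSpace 𝕜 E] (T : E →L[𝕜] E) {v : E} (hv : ‖v‖ = 1) :
    ‖(inner 𝕜 v (T v) : 𝕜)‖ ≤ ‖T‖ :=
  calc ‖(inner 𝕜 v (T v) : 𝕜)‖ ≤ ‖v‖ * ‖T v‖ := norm_inner_le_norm _ _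
    _ ≤ ‖v‖ * (‖T‖ * ‖v‖) := by gcongr; exact T.le_opNorm v
    _ = ‖T‖ := by rw [hv]; ring

theorem differentiableOn_tsum_cpow_neg_mul {ι : Type*} (lam : ι → ℝ)
    (hpos : ∀ i, 0 < lam i) (c : ι → ℂ) (s₀ : ℝ)
    (hsum : ∀ σ, s₀ < σ → Summable fun i => lam i ^ (-σ) * ‖c i‖) :
    DifferentiableOn ℂ (fun z : ℂ => ∑' i, (lam i : ℂ) ^ (-z) * c i) {z : ℂ | s₀ < z.re} := by
  intro z₀ (hz₀ : s₀ < z₀.re)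
  set σ := (s₀ + z₀.re) / 2 with hσ_def
  set M := z₀.re + 1 with hM_def
  have hσ : s₀ < σ := by linarith
  set U := Complex.re ⁻¹' Ioo σ M
  have hU : IsOpen U := isOpen_Ioo.preimage Complex.continuous_re
  have hz₀U : z₀ ∈ U := ⟨by linarith, by linarith⟩
  have hdiff : ∀ i, DifferentiableOn ℂ (fun z : ℂ => (lam i : ℂ) ^ (-z) * c i) U := fun i =>
    ((differentiable_id.neg.const_cpow
      (Or.inl (Complex.ofReal_ne_zero.mpr (hpos i).ne'))).mul_const _).differentiableOn
  have hbound : ∀ i, ∀ z ∈ U,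
      ‖(lam i : ℂ) ^ (-z) * c i‖ ≤ lam i ^ (-M) * ‖c i‖ + lam i ^ (-σ) * ‖c i‖ := by
    rintro i z ⟨hσz, hzM⟩
    rw [norm_mul, Complex.norm_cpow_eq_rpow_re_of_pos (hpos i), Complex.neg_re, ← add_mul]
    gcongr
    exact Real.rpow_le_rpow_add_rpow_of_mem_Icc (hpos i)
      ⟨neg_le_neg hzM.le, neg_le_neg hσz.le⟩
  have hstrip := Complex.differentiableOn_tsum_of_summable_norm
    ((hsum M (by linarith)).add (hsum σ hσ)) hdiff hU hbound
  exact (hstrip.differentiableAt (hU.mem_nhds hz₀U)).differentiableWithinAt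

/-- `Δ` is presented by its eigenbasis `e` and eigenvalues `lam`, `X ∈ Op^{-t}` by a bounded `B`
with `X = Δ^{-t/r} B`, and the trace is the sum of the diagonal coefficients in the eigenbasis. -/
theorem spectral_zeta_holomorphic_general {H : Type*} [NormedAddCommGroup H]
    [InnerProductSpace ℂ H] [CompleteSpace H]
    (e : HilbertBasis ℕ ℂ H) (lam : ℕ → ℝ)
    (hpos : ∀ n, 0 < lam n)
    (hcpt : Filter.Tendsto lam Filter.atTop Filter.atTop)
    (r : ℕ) (p : ℝ)
    (hSchatten : Summable fun n => (lam n) ^ (-(p / r)))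
    (t : ℝ) (X B : H →L[ℂ] H)
    (hX : ∀ (v : H) (n : ℕ),
      (inner ℂ (e n) (X v) : ℂ) = (((lam n) ^ (-(t / r)) : ℝ) : ℂ) * (inner ℂ (e n) (B v) : ℂ)) :
    DifferentiableOn ℂ
      (fun z : ℂ => ∑' n, (lam n : ℂ) ^ (-z) * (inner ℂ (e n) (X (e n)) : ℂ))
      {z : ℂ | (p - t) / r < z.re} := by
  refine differentiableOn_tsum_cpow_neg_mul lam hpos _ _ fun σ hσ => ?_
  have hcoeff : ∀ n, ‖(inner ℂ (e n) (X (e n)) : ℂ)‖ ≤ lam n ^ (-(t / r)) * ‖B‖ := fun n => by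
    rw [hX, norm_mul, Complex.norm_real, Real.norm_of_nonneg (Real.rpow_nonneg (hpos n).le _)]
    exact mul_le_mul_of_nonneg_left (B.norm_inner_map_le_opNorm (e.orthonormal.1 n))
      (Real.rpow_nonneg (hpos n).le _)
  have hexp : p / r ≤ σ + t / r := by rw [sub_div] at hσ; linarith
  have hlam_ge_one : ∀ᶠ n in cofinite, 1 ≤ lam n :=
    Nat.cofinite_eq_atTop ▸ hcpt.eventually_ge_atTop 1
  have hmajorant := (summable_rpow_neg_of_le hlam_ge_one hSchatten hexp).mul_right ‖B‖
  refine hmajorant.of_nonneg_of_le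
    (fun n => mul_nonneg (Real.rpow_nonneg (hpos n).le _) (norm_nonneg _)) fun n => ?_
  calc lam n ^ (-σ) * ‖(inner ℂ (e n) (X (e n)) : ℂ)‖
      ≤ lam n ^ (-σ) * (lam n ^ (-(t / r)) * ‖B‖) :=
        mul_le_mul_of_nonneg_left (hcoeff n) (Real.rpow_nonneg (hpos n).le _)
    _ = lam n ^ (-(σ + t / r)) * ‖B‖ := by
      rw [neg_add, Real.rpow_add (hpos n)]; ring

/-- If `Δ^{-1/r} ∈ L^p(H)` (Schatten) and `X ∈ Op^{-t}` (i.e. `X = Δ^{-t/r} B` with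
`B` bounded), then the spectral zeta function `z ↦ Trace(X Δ^{-z})` is holomorphic on
`{Re z > (p-t)/r}`.  `Δ` is presented by its spectral data, and the trace is the sum
of diagonal matrix coefficients with respect to the eigenbasis. -/
theorem spectral_zeta_holomorphic {H : Type*} [NormedAddCommGroup H]
    [InnerProductSpace ℂ H] [CompleteSpace H]
    (e : HilbertBasis ℕ ℂ H) (lam : ℕ → ℝ)
    (hpos : ∀ n, 0 < lam n) (hinv : ∃ c > 0, ∀ n, c ≤ lam n)
    (hcpt : Filter.Tendsto lam Filter.atTop Filter.atTop)
    (r : ℕ) (hr : 1 ≤ r) (p : ℝ) (hp : 1 ≤ p)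
    (hSchatten : Summable fun n => (lam n) ^ (-(p / r)))
    (t : ℝ) (X B : H →L[ℂ] H)
    (hX : ∀ (v : H) (n : ℕ),
      (inner ℂ (e n) (X v) : ℂ) = (((lam n) ^ (-(t / r)) : ℝ) : ℂ) * (inner ℂ (e n) (B v) : ℂ)) :
    DifferentiableOn ℂ
      (fun z : ℂ => ∑' n, (lam n : ℂ) ^ (-z) * (inner ℂ (e n) (X (e n)) : ℂ))
      {z : ℂ | (p - t) / r < z.re} :=
  spectral_zeta_holomorphic_general e lam hpos hcpt r p hSchatten t X B hX
end

section
/- Let I be a two-sided ideal of U(g) with PBW basis S. The set T(I) of leading monomials of nonzero elements of I is an upper set for the componentwise partial ordering ⪯ on monomials: if V ∈ T(I), W ∈ S and V ⪯ W (i.e., each exponent of V is at most the corresponding exponent of W), then W ∈ T(I). -/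
/-!
If `u ∈ I` has leading monomial `v`, then `ι(X i) * u ∈ I` has leading monomial `v + eᵢ`:
modulo monomials of degree at most `|m|`, `ι(X i) * B m` is `B (m + eᵢ)`, and the
degree-lexicographic order is graded and translation invariant. So `T(I)` is closed under
adding unit vectors, hence is an upper set.

The congruence is proved by induction on `|m|`, commuting `X i` past smaller generators. It
needs `ι z ∈ span {1, ι (X 1), …, ι (X n)}` for every `z ∈ L`, which comes from the coproduct
`Δ (ι z) = ι z ⊗ 1 + 1 ⊗ ι z`: for `i` minimal in `m + eᵢ`, the coefficient of `B eᵢ ⊗ B m` in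
`Δ (B (m + eᵢ))` is `mᵢ + 1 ≠ 0`, whereas it vanishes for a primitive element.
-/

open Finsupp UniversalEnvelopingAlgebra TensorProduct
open Module (Basis)

namespace Finsupp

variable {σ : Type*} [LinearOrder σ]

theorem exists_eq_add_single_of_ne_zero {m : σ →₀ ℕ} (hm : m ≠ 0) :
    ∃ i m', m = m' + single i 1 ∧ ∀ k < i, m' k = 0 := by
  classical
  have hne : m.support.Nonempty := support_nonempty_iff.mpr hm
  set i := m.support.min' hne
  have hmin : ∀ k < i, m k = 0 := fun k hk =>
    notMem_support_iff.mp fun hk' => (m.support.min'_le k hk').not_gt hk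
  have hi : 1 ≤ m i := Nat.one_le_iff_ne_zero.mpr (mem_support_iff.mp (m.support.min'_mem hne))
  refine ⟨i, m - single i 1, (tsub_add_cancel_of_le (single_le_iff.mpr hi)).symm, fun k hk => ?_⟩
  simp [hmin k hk]

theorem induction_add_single_min {p : (σ →₀ ℕ) → Prop} (zero : p 0)
    (add_single : ∀ m i, (∀ k < i, m k = 0) → p m → p (m + single i 1)) (m : σ →₀ ℕ) : p m := by
  induction h : m.degree using Nat.strong_induction_on generalizing m with
  | _ d ih =>
    obtain rfl | hm := eq_or_ne m 0
    · exact zero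
    obtain ⟨i, m', rfl, hm'⟩ := exists_eq_add_single_of_ne_zero hm
    exact add_single m' i hm' (ih m'.degree (by simp [← h]) m' rfl)

end Finsupp

theorem isUpperSet_of_add_single_mem {σ : Type*} {s : Set (σ →₀ ℕ)}
    (h : ∀ v ∈ s, ∀ i, v + single i 1 ∈ s) : IsUpperSet s := by
  suffices key : ∀ d, ∀ v ∈ s, v + d ∈ s by
    intro v w hvw hv
    simpa [add_tsub_cancel_of_le hvw] using key (w - v) v hv
  intro d
  induction d using Finsupp.induction_linear with
  | zero => simp
  | add d₁ d₂ h₁ h₂ => exact fun v hv => add_assoc v d₁ d₂ ▸ h₂ _ (h₁ v hv)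
  | single i b =>
    induction b with
    | zero => simp
    | succ b ih =>
      intro v hv
      simpa [single_add, add_assoc] using h _ (ih v hv) i

theorem List.prod_map_pow_add_single {σ M : Type*} [LinearOrder σ] [Monoid M] (x : σ → M)
    {m : σ →₀ ℕ} {i : σ} (hm : ∀ k < i, m k = 0) {l : List σ} (hl : l.Pairwise (· < ·))
    (hi : i ∈ l) :
    (l.map fun k => x k ^ (m + Finsupp.single i 1 : σ →₀ ℕ) k).prod =
      x i * (l.map fun k => x k ^ m k).prod := by
  induction l with
  | nil => simp at hi
  | cons a l ih =>
    rw [List.pairwise_cons] at hl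
    obtain rfl | hil := List.mem_cons.mp hi
    · have htail : ∀ k ∈ l, x k ^ (m + Finsupp.single i 1 : σ →₀ ℕ) k = x k ^ m k :=
        fun k hk => by simp [Finsupp.single_eq_of_ne (hl.1 k hk).ne']
      simp only [List.map_cons, List.prod_cons, List.map_congr_left htail]
      simp [pow_succ', mul_assoc]
    · have hai : a < i := hl.1 i hil
      simp only [List.map_cons, List.prod_cons, ih hl.2 hil]
      simp [hm a hai, Finsupp.single_eq_of_ne hai.ne]

theorem Module.Basis.repr_sum_smul_comp {ι κ R M : Type*} [Semiring R] [AddCommMonoid M]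
    [Module R M] (b : Basis ι R M) (g : κ → ι) (c : κ →₀ R) :
    b.repr (c.sum fun p a => a • b (g p)) = c.mapDomain g := by
  rw [← linearCombination_apply, ← Function.comp_def b g, ← linearCombination_mapDomain,
    b.repr_linearCombination]

theorem Module.Basis.repr_map_eq_mapDomain {ι R M : Type*} [Semiring R] [AddCommMonoid M]
    [Module R M] (b : Basis ι R M) (f : M →ₗ[R] M) (g : ι → ι) {x : M}
    (h : ∀ p ∈ (b.repr x).support, f (b p) = b (g p)) :
    b.repr (f x) = (b.repr x).mapDomain g := by
  conv_lhs => rw [← b.linearCombination_repr x]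
  rw [linearCombination_apply, map_finsuppSum, ← b.repr_sum_smul_comp]
  exact congrArg b.repr (Finsupp.sum_congr fun p hp => by rw [map_smul, h p hp])

section Filtration

variable {σ K A : Type*} [CommSemiring K] [AddCommMonoid A] [Module K A]
  (B : Basis (σ →₀ ℕ) K A)

def degreeFiltration (d : ℕ) : Submodule K A :=
  Submodule.span K (B '' {m | m.degree ≤ d})

variable {B}

theorem mem_degreeFiltration_iff {d : ℕ} {x : A} :
    x ∈ degreeFiltration B d ↔ ∀ m ∈ (B.repr x).support, m.degree ≤ d :=
  B.mem_span_image

theorem basis_mem_degreeFiltration {m : σ →₀ ℕ} {d : ℕ} (h : m.degree ≤ d) :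
    B m ∈ degreeFiltration B d :=
  Submodule.subset_span ⟨m, h, rfl⟩

theorem degreeFiltration_mono : Monotone (degreeFiltration B) := fun _ _ hde =>
  Submodule.span_mono (Set.image_mono fun _ hm => le_trans hm hde)

end Filtration

section DegLexLeading

variable {σ K : Type*} [LinearOrder σ] [AddCommMonoid K]

def IsDegLexLeading (c : (σ →₀ ℕ) →₀ K) (v : σ →₀ ℕ) : Prop :=
  v ∈ c.support ∧ ∀ m ∈ c.support, toDegLex m ≤ toDegLex v

theorem IsDegLexLeading.mapDomain_add_add {c r : (σ →₀ ℕ) →₀ K} {v : σ →₀ ℕ}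
    (hv : IsDegLexLeading c v) (d : σ →₀ ℕ) (hr : ∀ p ∈ r.support, p.degree < (v + d).degree) :
    IsDegLexLeading (c.mapDomain (· + d) + r) (v + d) := by
  classical
  have hrv : r (v + d) = 0 := notMem_support_iff.mp fun h => (hr _ h).false
  refine ⟨?_, fun p hp => ?_⟩
  · rw [mem_support_iff, Finsupp.add_apply, mapDomain_apply (add_left_injective d), hrv, add_zero]
    exact mem_support_iff.mp hv.1
  · rcases Finset.mem_union.mp (support_add hp) with hp | hp
    · obtain ⟨m, hm, rfl⟩ := Finset.mem_image.mp (mapDomain_support hp)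
      simpa only [toDegLex_add] using add_le_add_left (hv.2 m hm) (toDegLex d)
    · exact (DegLex.lt_iff.mpr (Or.inl (hr p hp))).le

end DegLexLeading

section PBW

variable {K L : Type*} [CommRing K] [LieRing L] [LieAlgebra K L] {n : ℕ}

def IsPBWBasis (B : Basis (Fin n →₀ ℕ) K (UniversalEnvelopingAlgebra K L)) (X : Fin n → L) :
    Prop :=
  ∀ m, B m = ((List.finRange n).map fun i => ι K (X i) ^ m i).prod

namespace IsPBWBasis

variable {X : Fin n → L} {B : Basis (Fin n →₀ ℕ) K (UniversalEnvelopingAlgebra K L)}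

theorem apply_zero (hB : IsPBWBasis B X) : B 0 = 1 := by
  simp [hB 0]

theorem apply_add_single (hB : IsPBWBasis B X) {m : Fin n →₀ ℕ} {i : Fin n}
    (hm : ∀ k < i, m k = 0) : B (m + single i 1) = ι K (X i) * B m := by
  rw [hB, hB]
  exact List.prod_map_pow_add_single _ hm (List.pairwise_lt_finRange n) (List.mem_finRange i)

theorem apply_single (hB : IsPBWBasis B X) (i : Fin n) : B (single i 1) = ι K (X i) := by
  simpa [hB.apply_zero] using hB.apply_add_single (m := 0) (i := i) fun _ _ => rfl

end IsPBWBasis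

end PBW

namespace UniversalEnvelopingAlgebra

attribute [local instance 100] LieRing.ofAssociativeRing

variable (K L : Type*) [CommRing K] [LieRing L] [LieAlgebra K L]

local notation "𝓤" => UniversalEnvelopingAlgebra K L

theorem ι_mul_ι_eq_add (x y : L) : ι K x * ι K y = ι K y * ι K x + ι K ⁅x, y⁆ := by
  rw [LieHom.map_lie, Ring.lie_def]
  abel

noncomputable def coproductLieHom : L →ₗ⁅K⁆ 𝓤 ⊗[K] 𝓤 where
  toFun z := ι K z ⊗ₜ 1 + 1 ⊗ₜ ι K z
  map_add' a b := by
    simp only [map_add, add_tmul, tmul_add]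
    abel
  map_smul' c a := by
    simp only [map_smul, smul_tmul', RingHom.id_apply, smul_add, smul_tmul]
  -- the cross terms cancel because `x ⊗ 1` and `1 ⊗ y` commute
  map_lie' := by
    intro a b
    simp only [LieHom.map_lie, Ring.lie_def, Algebra.TensorProduct.tmul_mul_tmul, mul_one,
      one_mul, sub_tmul, tmul_sub, add_mul, mul_add]
    abel

noncomputable def coproduct : 𝓤 →ₐ[K] 𝓤 ⊗[K] 𝓤 :=
  lift K (coproductLieHom K L)

variable {K L}

theorem coproduct_ι (z : L) : coproduct K L (ι K z) = ι K z ⊗ₜ 1 + 1 ⊗ₜ ι K z :=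
  lift_ι_apply K _ z

end UniversalEnvelopingAlgebra

section CoproductCoeff

variable {K L : Type*} [CommRing K] [LieRing L] [LieAlgebra K L] {n : ℕ}
  {X : Fin n → L} {B : Basis (Fin n →₀ ℕ) K (UniversalEnvelopingAlgebra K L)}

noncomputable def coproductCoeff (B : Basis (Fin n →₀ ℕ) K (UniversalEnvelopingAlgebra K L))
    (m : Fin n →₀ ℕ) : (Fin n →₀ ℕ) × (Fin n →₀ ℕ) →₀ K :=
  (B.tensorProduct B).repr (coproduct K L (B m))

theorem coproductCoeff_zero (hB : IsPBWBasis B X) : coproductCoeff B 0 = single (0, 0) 1 := by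
  rw [coproductCoeff, hB.apply_zero, map_one, Algebra.TensorProduct.one_def, ← hB.apply_zero,
    ← Basis.tensorProduct_apply, Basis.repr_self]

theorem coproductCoeff_add_single (hB : IsPBWBasis B X) {m : Fin n →₀ ℕ} {i : Fin n}
    (hm : ∀ k < i, m k = 0) (hsupp : ∀ p ∈ (coproductCoeff B m).support, p.1 + p.2 = m) :
    coproductCoeff B (m + single i 1) =
      (coproductCoeff B m).mapDomain (Prod.map (· + single i 1) id) +
        (coproductCoeff B m).mapDomain (Prod.map id (· + single i 1)) := by
  have hbelow : ∀ p ∈ (coproductCoeff B m).support, ∀ k < i, p.1 k = 0 ∧ p.2 k = 0 :=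
    fun p hp k hk => by simpa [← hsupp p hp] using hm k hk
  rw [coproductCoeff, hB.apply_add_single hm, map_mul, coproduct_ι, add_mul, map_add]
  congr 1 <;> refine Basis.repr_map_eq_mapDomain _ (LinearMap.mulLeft K _) _ fun p hp => ?_ <;>
    simp only [LinearMap.mulLeft_apply, Basis.tensorProduct_apply',
      Algebra.TensorProduct.tmul_mul_tmul, one_mul]
  · rw [← hB.apply_add_single fun k hk => (hbelow p hp k hk).1]
    rfl
  · rw [← hB.apply_add_single fun k hk => (hbelow p hp k hk).2]
    rfl

theorem support_coproductCoeff (hB : IsPBWBasis B X) (m : Fin n →₀ ℕ) :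
    ∀ p ∈ (coproductCoeff B m).support, p.1 + p.2 = m := by
  classical
  induction m using induction_add_single_min with
  | zero =>
    intro p hp
    rw [coproductCoeff_zero hB] at hp
    simp [Finset.mem_singleton.mp (support_single_subset hp)]
  | add_single m i hm ih =>
    intro p hp
    rw [coproductCoeff_add_single hB hm ih] at hp
    rcases Finset.mem_union.mp (support_add hp) with hp | hp <;>
      obtain ⟨q, hq, rfl⟩ := Finset.mem_image.mp (mapDomain_support hp)
    · simp [add_right_comm, ih q hq]
    · simp [← add_assoc, ih q hq]

theorem coproductCoeff_zero_self (hB : IsPBWBasis B X) (m : Fin n →₀ ℕ) :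
    coproductCoeff B m (0, m) = 1 := by
  induction m using induction_add_single_min with
  | zero => simp [coproductCoeff_zero hB]
  | add_single m i hm ih =>
    have hleft : (coproductCoeff B m).mapDomain (Prod.map (· + single i 1) id)
        (0, m + single i 1) = 0 :=
      mapDomain_of_notMem_range _ _ fun ⟨q, hq⟩ => by
        simpa using congrArg (· i) (congrArg Prod.fst hq)
    rw [coproductCoeff_add_single hB hm (support_coproductCoeff hB m), Finsupp.add_apply, hleft,
      zero_add]
    exact (mapDomain_apply (Prod.map_injective.mpr ⟨Function.injective_id, add_left_injective _⟩)
      _ (0, m)).trans ih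

theorem coproductCoeff_add_single_single (hB : IsPBWBasis B X) {m : Fin n →₀ ℕ} {i : Fin n}
    (hm : ∀ k < i, m k = 0) :
    coproductCoeff B (m + single i 1) (single i 1, m) = m i + 1 := by
  have hsplit : ∀ (m : Fin n →₀ ℕ) (i : Fin n), (∀ k < i, m k = 0) →
      coproductCoeff B (m + single i 1) (single i 1, m) =
        1 + (coproductCoeff B m).mapDomain (Prod.map id (· + single i 1)) (single i 1, m) := by
    intro m i hm
    have hleft : (coproductCoeff B m).mapDomain (Prod.map (· + single i 1) id)
        (single i 1, m) = 1 := by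
      simpa [coproductCoeff_zero_self hB] using mapDomain_apply
        (Prod.map_injective.mpr ⟨add_left_injective _, Function.injective_id⟩)
        (coproductCoeff B m) (0, m)
    rw [coproductCoeff_add_single hB hm (support_coproductCoeff hB m), Finsupp.add_apply, hleft]
  have hright_zero : ∀ (m : Fin n →₀ ℕ) (i : Fin n), m i = 0 →
      (coproductCoeff B m).mapDomain (Prod.map id (· + single i 1)) (single i 1, m) = 0 :=
    fun m i hmi => mapDomain_of_notMem_range _ _ fun ⟨q, hq⟩ => by
      simpa [hmi] using congrArg (· i) (congrArg Prod.snd hq)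
  induction m using induction_add_single_min generalizing i with
  | zero =>
    rw [hsplit 0 i hm, hright_zero 0 i rfl]
    simp
  | add_single m j hmj ih =>
    have hij : i ≤ j := not_lt.mp fun hji => by simpa using hm j hji
    rw [hsplit _ i hm]
    rcases hij.lt_or_eq with hij | rfl
    · have hmi : (m + single j 1 : Fin n →₀ ℕ) i = 0 := by
        simp [hmj i hij, single_eq_of_ne hij.ne]
      rw [hright_zero _ i hmi, hmi]
      simp
    · have hright : (coproductCoeff B (m + single i 1)).mapDomain (Prod.map id (· + single i 1))
          (single i 1, m + single i 1) = m i + 1 :=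
        (mapDomain_apply (Prod.map_injective.mpr ⟨Function.injective_id, add_left_injective _⟩)
          (coproductCoeff B (m + single i 1)) (single i 1, m)).trans (ih hmj)
      rw [hright]
      push_cast [Finsupp.add_apply, single_eq_same]
      ring

end CoproductCoeff

section DegreeFiltration

variable {K L : Type*} [CommRing K] [LieRing L] [LieAlgebra K L] {n : ℕ}
  {X : Fin n → L} {B : Basis (Fin n →₀ ℕ) K (UniversalEnvelopingAlgebra K L)}

theorem degreeFiltration_one_mul_le (hB : IsPBWBasis B X) {e : ℕ}
    (h : ∀ m : Fin n →₀ ℕ, m.degree ≤ e → ∀ j,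
      ι K (X j) * B m - B (m + single j 1) ∈ degreeFiltration B m.degree) :
    degreeFiltration B 1 * degreeFiltration B e ≤ degreeFiltration B (e + 1) := by
  rw [degreeFiltration, degreeFiltration, Submodule.span_mul_span, Submodule.span_le]
  rintro _ ⟨_, ⟨k, hk, rfl⟩, _, ⟨m, hm, rfl⟩, rfl⟩
  obtain rfl | hk0 := eq_or_ne k 0
  · simpa [hB.apply_zero] using degreeFiltration_mono e.le_succ (basis_mem_degreeFiltration hm)
  obtain ⟨j, k', rfl, -⟩ := exists_eq_add_single_of_ne_zero hk0
  obtain rfl : k' = 0 := by simpa [← degree_eq_zero_iff] using hk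
  simp only [zero_add, hB.apply_single, SetLike.mem_coe]
  rw [← sub_add_cancel (ι K (X j) * B m) (B (m + single j 1))]
  exact add_mem (degreeFiltration_mono (hm.trans e.le_succ) (h m hm j))
    (basis_mem_degreeFiltration (by simpa using hm))

variable [NoZeroDivisors K] [CharZero K]

theorem ι_mem_degreeFiltration_one (hB : IsPBWBasis B X) (z : L) :
    ι K z ∈ degreeFiltration B 1 := by
  classical
  rw [mem_degreeFiltration_iff]
  intro m hm
  by_contra! hdeg
  obtain ⟨i, m', rfl, hm'⟩ := exists_eq_add_single_of_ne_zero (m := m) (by rintro rfl; simp at hdeg)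
  have hm'0 : m' ≠ 0 := by rintro rfl; simp at hdeg
  set c := B.repr (ι K z)
  have hprim : (B.tensorProduct B).repr (coproduct K L (ι K z)) (single i 1, m') = 0 := by
    rw [coproduct_ι, map_add, Finsupp.add_apply, Basis.tensorProduct_repr_tmul_apply,
      Basis.tensorProduct_repr_tmul_apply, ← hB.apply_zero, B.repr_self]
    simp [Ne.symm hm'0]
  have hexp : (B.tensorProduct B).repr (coproduct K L (ι K z)) =
      c.sum fun k a => a • coproductCoeff B k := by
    conv_lhs => rw [← B.linearCombination_repr (ι K z), linearCombination_apply, map_finsuppSum,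
      map_finsuppSum]
    simp only [map_smul]
    rfl
  have hsum : (B.tensorProduct B).repr (coproduct K L (ι K z)) (single i 1, m') =
      c (m' + single i 1) * (m' i + 1) := by
    rw [hexp, Finsupp.sum_apply, Finsupp.sum, Finset.sum_eq_single (m' + single i 1)]
    · simp [coproductCoeff_add_single_single hB hm']
    · intro k _ hk
      have hk' : (single i 1, m') ∉ (coproductCoeff B k).support := fun h => hk <| by
        rw [← support_coproductCoeff hB k _ h, add_comm]
      rw [Finsupp.smul_apply, notMem_support_iff.mp hk', smul_zero]
    · exact fun h => absurd hm h
  have hc : c (m' + single i 1) = 0 := by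
    simpa [Nat.cast_add_one_ne_zero] using hsum.symm.trans hprim
  exact mem_support_iff.mp hm hc

theorem ι_mul_sub_mem_degreeFiltration (hB : IsPBWBasis B X) (m : Fin n →₀ ℕ) (j : Fin n) :
    ι K (X j) * B m - B (m + single j 1) ∈ degreeFiltration B m.degree := by
  induction hd : m.degree using Nat.strong_induction_on generalizing m j with
  | _ d ih =>
    obtain rfl | hm0 := eq_or_ne m 0
    · simp [hB.apply_zero, hB.apply_single]
    obtain ⟨i, m', rfl, hm'⟩ := exists_eq_add_single_of_ne_zero hm0
    rcases le_or_gt j i with hji | hij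
    · rw [← hB.apply_add_single fun k hk => by
        simp [hm' k (hk.trans_le hji), single_eq_of_ne (hk.trans_le hji).ne], sub_self]
      exact zero_mem _
    have hdeg : m'.degree + 1 = d := by simpa using hd
    have hmul : degreeFiltration B 1 * degreeFiltration B m'.degree ≤ degreeFiltration B d :=
      hdeg ▸ degreeFiltration_one_mul_le hB fun p hp j => ih p.degree (by omega) p j rfl
    have hswap : B (m' + single i 1 + single j 1) = ι K (X i) * B (m' + single j 1) := by
      rw [add_right_comm]
      exact hB.apply_add_single fun k hk => by simp [hm' k hk, single_eq_of_ne (hk.trans hij).ne]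
    have hexpand : ι K (X j) * B (m' + single i 1) - B (m' + single i 1 + single j 1) =
        ι K (X i) * (ι K (X j) * B m' - B (m' + single j 1)) + ι K ⁅X j, X i⁆ * B m' := by
      rw [hB.apply_add_single hm', hswap, ← mul_assoc, ι_mul_ι_eq_add]
      noncomm_ring
    rw [hexpand]
    exact add_mem
      (hmul (Submodule.mul_mem_mul (ι_mem_degreeFiltration_one hB _) (ih _ (by omega) m' j rfl)))
      (hmul (Submodule.mul_mem_mul (ι_mem_degreeFiltration_one hB _)
        (basis_mem_degreeFiltration le_rfl)))

theorem IsDegLexLeading.repr_ι_mul (hB : IsPBWBasis B X) {u : UniversalEnvelopingAlgebra K L}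
    {v : Fin n →₀ ℕ} (hv : IsDegLexLeading (B.repr u) v) (i : Fin n) :
    IsDegLexLeading (B.repr (ι K (X i) * u)) (v + single i 1) := by
  set c := B.repr u
  have hsplit : ι K (X i) * u = (c.sum fun m a => a • B (m + single i 1)) +
      c.sum fun m a => a • (ι K (X i) * B m - B (m + single i 1)) := by
    conv_lhs => rw [← B.linearCombination_repr u, linearCombination_apply, Finsupp.mul_sum]
    rw [← Finsupp.sum_add]
    exact Finsupp.sum_congr fun m _ => by rw [mul_smul_comm, ← smul_add, add_sub_cancel]
  have hr : (c.sum fun m a => a • (ι K (X i) * B m - B (m + single i 1))) ∈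
      degreeFiltration B v.degree :=
    Submodule.sum_mem _ fun m hm => Submodule.smul_mem _ _ <|
      degreeFiltration_mono (DegLex.monotone_degree (hv.2 m hm))
        (ι_mul_sub_mem_degreeFiltration hB m i)
  rw [hsplit, map_add, B.repr_sum_smul_comp]
  refine hv.mapDomain_add_add _ fun p hp => ?_
  have := mem_degreeFiltration_iff.mp hr p hp
  simp only [map_add, degree_single]
  omega

end DegreeFiltration

theorem leading_monomials_upper_set_general {L : Type*} [LieRing L] [LieAlgebra ℂ L]
    (n : ℕ) (X : Fin n → L)
    (B : Module.Basis (Fin n →₀ ℕ) ℂ (UniversalEnvelopingAlgebra ℂ L))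
    (hB : ∀ m : Fin n →₀ ℕ, B m =
      ((List.finRange n).map fun i => (UniversalEnvelopingAlgebra.ι ℂ (X i)) ^ (m i)).prod)
    (dlex : (Fin n →₀ ℕ) → (Fin n →₀ ℕ) → Prop)
    (hdlex : ∀ a b : Fin n →₀ ℕ, dlex a b ↔
      ((a.sum fun _ k => k) < (b.sum fun _ k => k) ∨
        ((a.sum fun _ k => k) = (b.sum fun _ k => k) ∧
          Finsupp.Lex (· < ·) (· < ·) a b)))
    (lead : UniversalEnvelopingAlgebra ℂ L → (Fin n →₀ ℕ) → Prop)
    (hlead : ∀ u m, lead u m ↔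
      (u ≠ 0 ∧ m ∈ (B.repr u).support ∧
        ∀ m' ∈ (B.repr u).support, m' = m ∨ dlex m' m))
    (I : Submodule ℂ (UniversalEnvelopingAlgebra ℂ L))
    (hIl : ∀ a : UniversalEnvelopingAlgebra ℂ L, ∀ x ∈ I, a * x ∈ I)
    (TI : Set (Fin n →₀ ℕ)) (hTI : TI = {m | ∃ u ∈ I, lead u m}) :
    ∀ v ∈ TI, ∀ w : Fin n →₀ ℕ, v ≤ w → w ∈ TI := by
  have hdegLex : ∀ a b, dlex a b ↔ toDegLex a < toDegLex b := fun a b =>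
    (hdlex a b).trans DegLex.lt_iff.symm
  have hlead' : ∀ u m, lead u m ↔ IsDegLexLeading (B.repr u) m := fun u m => by
    simp only [hlead, hdegLex, IsDegLexLeading, le_iff_eq_or_lt, toDegLex_inj]
    exact ⟨And.right, fun h => ⟨fun hu => by simp [hu] at h, h⟩⟩
  subst hTI
  refine fun v hv w hvw => isUpperSet_of_add_single_mem ?_ hvw hv
  rintro v ⟨u, hu, hlu⟩ i
  exact ⟨ι ℂ (X i) * u, hIl _ u hu, (hlead' _ _).mpr (((hlead' u v).mp hlu).repr_ι_mul hB i)⟩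

/-- For a two-sided ideal `I` of `U(g)` with PBW monomial basis `B`, the set `T(I)`
of leading monomials of nonzero elements of `I` (leading with respect to the total
degree order refined lexicographically) is an upper set for the componentwise partial
order on multi-indices. -/
theorem leading_monomials_upper_set {L : Type*} [LieRing L] [LieAlgebra ℂ L]
    (n : ℕ) (X : Fin n → L)
    (B : Module.Basis (Fin n →₀ ℕ) ℂ (UniversalEnvelopingAlgebra ℂ L))
    (hB : ∀ m : Fin n →₀ ℕ, B m =
      ((List.finRange n).map fun i => (UniversalEnvelopingAlgebra.ι ℂ (X i)) ^ (m i)).prod)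
    (dlex : (Fin n →₀ ℕ) → (Fin n →₀ ℕ) → Prop)
    (hdlex : ∀ a b : Fin n →₀ ℕ, dlex a b ↔
      ((a.sum fun _ k => k) < (b.sum fun _ k => k) ∨
        ((a.sum fun _ k => k) = (b.sum fun _ k => k) ∧
          Finsupp.Lex (· < ·) (· < ·) a b)))
    (lead : UniversalEnvelopingAlgebra ℂ L → (Fin n →₀ ℕ) → Prop)
    (hlead : ∀ u m, lead u m ↔
      (u ≠ 0 ∧ m ∈ (B.repr u).support ∧
        ∀ m' ∈ (B.repr u).support, m' = m ∨ dlex m' m))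
    (I : Submodule ℂ (UniversalEnvelopingAlgebra ℂ L))
    (hIl : ∀ a : UniversalEnvelopingAlgebra ℂ L, ∀ x ∈ I, a * x ∈ I)
    (hIr : ∀ a : UniversalEnvelopingAlgebra ℂ L, ∀ x ∈ I, x * a ∈ I)
    (TI : Set (Fin n →₀ ℕ)) (hTI : TI = {m | ∃ u ∈ I, lead u m}) :
    ∀ v ∈ TI, ∀ w : Fin n →₀ ℕ, v ≤ w → w ∈ TI :=
  leading_monomials_upper_set_general n X B hB dlex hdlex lead hlead I hIl TI hTI
end

section
/- In the Weyl algebra A_1 with [P,Q] = 1, define the Euler-type operator H(T) = [P T, Q] + [P, T Q] acting on A_1. Then for every monomial T = P^p Q^q, H(T) = (p + q + 2)·T. Consequently H - (s+2)·Id annihilates every homogeneous element of degree s (span of monomials P^p Q^q with p + q = s). -/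
lemma weyl_QPow {A : Type*} [Ring A] (P Q : A) (h : P * Q - Q * P = 1) :
    ∀ n : ℕ, Q * P ^ (n + 1) = P ^ (n + 1) * Q - (n + 1) • P ^ n := by
  have hQP : Q * P = P * Q - 1 := by rw [← h]; abel
  intro n
  induction n with
  | zero => simpa using hQP
  | succ n ih =>
    rw [pow_succ P (n + 1), ← mul_assoc, ih, sub_mul, mul_assoc (P ^ (n + 1)) Q P, hQP]
    simp only [succ_nsmul, add_smul, one_smul, mul_sub, mul_one, add_mul, smul_mul_assoc,
      ← pow_succ, ← mul_assoc]
    abel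

lemma weyl_PowP {A : Type*} [Ring A] (P Q : A) (h : P * Q - Q * P = 1) :
    ∀ n : ℕ, Q ^ (n + 1) * P = P * Q ^ (n + 1) - (n + 1) • Q ^ n := by
  have hQP : Q * P = P * Q - 1 := by rw [← h]; abel
  intro n
  induction n with
  | zero => simpa using hQP
  | succ n ih =>
    rw [pow_succ' Q (n + 1), mul_assoc, ih, mul_sub, ← mul_assoc, hQP]
    simp only [succ_nsmul, add_smul, one_smul, sub_mul, one_mul, mul_add, mul_smul_comm,
      ← pow_succ', mul_assoc]
    abel

/-- In the Weyl algebra `A₁` with `[P,Q] = 1`, the Euler type operator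
`H(T) = [P T, Q] + [P, T Q]` satisfies `H(P^p Q^q) = (p+q+2)·P^p Q^q`, and
consequently `H - (s+2)·Id` annihilates every homogeneous element of degree `s`. -/
theorem weyl_euler_operator {A : Type*} [Ring A] [Algebra ℂ A] (P Q : A)
    (h : P * Q - Q * P = 1)
    (H : A →ₗ[ℂ] A)
    (hH : ∀ T : A, H T = (P * T * Q - Q * (P * T)) + (P * (T * Q) - (T * Q) * P)) :
    (∀ p q : ℕ, H (P ^ p * Q ^ q) = (p + q + 2) • (P ^ p * Q ^ q)) ∧
      (∀ s : ℕ, ∀ T ∈ Submodule.span ℂ {x : A | ∃ p q : ℕ, p + q = s ∧ x = P ^ p * Q ^ q},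
        H T = (s + 2) • T) := by
  have key : ∀ p q : ℕ, H (P ^ p * Q ^ q) = (p + q + 2) • (P ^ p * Q ^ q) := by
    intro p q
    rw [hH]
    have h1 : P * (P ^ p * Q ^ q) = P ^ (p + 1) * Q ^ q := by
      rw [pow_succ', mul_assoc]
    have h2 : (P ^ p * Q ^ q) * Q = P ^ p * Q ^ (q + 1) := by
      rw [pow_succ, mul_assoc]
    have h3 : Q * (P ^ (p + 1) * Q ^ q) = (P ^ (p + 1) * Q - (p + 1) • P ^ p) * Q ^ q := by
      rw [← weyl_QPow P Q h p, mul_assoc]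
    have h4 : (P ^ p * Q ^ (q + 1)) * P = P ^ p * (P * Q ^ (q + 1) - (q + 1) • Q ^ q) := by
      rw [← weyl_PowP P Q h q, mul_assoc]
    rw [h1, h2, h3, h4]
    have e1 : P ^ (p + 1) * Q ^ q * Q = P ^ (p + 1) * Q ^ (q + 1) := by
      rw [mul_assoc, ← pow_succ]
    have e2 : (P ^ (p + 1) * Q - (p + 1) • P ^ p) * Q ^ q
        = P ^ (p + 1) * Q ^ (q + 1) - (p + 1) • (P ^ p * Q ^ q) := by
      rw [sub_mul, smul_mul_assoc, mul_assoc, ← pow_succ']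
    have e3 : P * (P ^ p * Q ^ (q + 1)) = P ^ (p + 1) * Q ^ (q + 1) := by
      rw [← mul_assoc, ← pow_succ']
    have e4 : P ^ p * (P * Q ^ (q + 1) - (q + 1) • Q ^ q)
        = P ^ (p + 1) * Q ^ (q + 1) - (q + 1) • (P ^ p * Q ^ q) := by
      rw [mul_sub, mul_smul_comm, ← mul_assoc, ← pow_succ]
    rw [e1, e2, e3, e4]
    have hc : (p + 1) • (P ^ p * Q ^ q) + (q + 1) • (P ^ p * Q ^ q)
        = (p + q + 2) • (P ^ p * Q ^ q) := by
      rw [← add_smul]; congr 1; omega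
    rw [← hc]
    abel
  refine ⟨key, ?_⟩
  intro s T hT
  have hle : Submodule.span ℂ {x : A | ∃ p q : ℕ, p + q = s ∧ x = P ^ p * Q ^ q} ≤
      LinearMap.ker (H - ((s : ℂ) + 2) • LinearMap.id) := by
    rw [Submodule.span_le]
    rintro x ⟨p, q, hpq, rfl⟩
    simp only [SetLike.mem_coe, LinearMap.mem_ker, LinearMap.sub_apply, LinearMap.smul_apply,
      LinearMap.id_apply, key, sub_eq_zero, hpq]
    rw [← Nat.cast_smul_eq_nsmul ℂ]
    push_cast
    ring_nf
  have hk := hle hT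
  rw [LinearMap.mem_ker, LinearMap.sub_apply, LinearMap.smul_apply, LinearMap.id_apply,
    sub_eq_zero] at hk
  rw [hk, ← Nat.cast_smul_eq_nsmul ℂ]
  push_cast
  ring_nf
end
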